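/- Among all simple connected graphs G on n vertices, the complete graph K_n maximizes the Rényi-p entropy of the normalized symmetric Laplacian for every p > 1: H_p(G) ≤ H_p(K_n) = log(n-1). -/

import Mathlib

open Real BigOperators Finset Matrix SimpleGraph

noncomputable def nLap {V : Type*} [Fintype V] [DecidableEq V]
    (G : SimpleGraph V) [DecidableRel G.Adj] : Matrix V V ℝ :=
  Matrix.diagonal (fun v => 1 / Real.sqrt (G.degree v : ℝ)) *
    (Matrix.diagonal (fun v => (G.degree v : ℝ)) - G.adjMatrix ℝ) *
    Matrix.diagonal (fun v => 1 / Real.sqrt (G.degree v : ℝ))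

/-!
The density matrix ρ = 𝓛/n is positive semidefinite with trace 1, and 𝓛 kills the vector
(√d_v)_v, so the spectrum of ρ is a probability vector with a zero entry. The power-mean
inequality on the remaining n - 1 entries gives Σ λᵢ^p ≥ (n-1)^(1-p) for p ≥ 1. For K_n,
ρ² = ρ/(n-1), so every eigenvalue is 0 or 1/(n-1) and Σ λᵢ^p = (n-1)^(1-p) exactly.
Multiplying logarithms by 1/(1-p) < 0 reverses the inequality.
-/

lemma Real.rpow_eq_rpow_sub_one_mul_of_eq_zero_or_eq {x c p : ℝ} (hp : 0 < p) (hc : 0 < c)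
    (hx : x = 0 ∨ x = c) : x ^ p = c ^ (p - 1) * x := by
  rcases hx with rfl | rfl
  · rw [Real.zero_rpow hp.ne', mul_zero]
  · rw [Real.rpow_sub_one hc.ne', div_mul_cancel₀ _ hc.ne']

lemma Finset.sum_rpow_of_eq_zero_or_eq {ι : Type*} (s : Finset ι) {x : ι → ℝ} {c p : ℝ}
    (hp : 0 < p) (hc : 0 < c) (hx : ∀ i ∈ s, x i = 0 ∨ x i = c) (hsum : ∑ i ∈ s, x i = 1) :
    ∑ i ∈ s, x i ^ p = c ^ (p - 1) := by
  rw [Finset.sum_congr rfl fun i hi =>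
      Real.rpow_eq_rpow_sub_one_mul_of_eq_zero_or_eq hp hc (hx i hi),
    ← Finset.mul_sum, hsum, mul_one]

lemma Finset.card_rpow_one_sub_le_sum_rpow {ι : Type*} (s : Finset ι) {x : ι → ℝ}
    (hx : ∀ i ∈ s, 0 ≤ x i) (hsum : ∑ i ∈ s, x i = 1) {p : ℝ} (hp : 1 ≤ p) :
    (#s : ℝ) ^ (1 - p) ≤ ∑ i ∈ s, x i ^ p := by
  have hs : s.Nonempty := Finset.nonempty_of_sum_ne_zero (by rw [hsum]; exact one_ne_zero)
  have hm : (0 : ℝ) < #s := by exact_mod_cast hs.card_pos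
  have hjensen := Real.rpow_arith_mean_le_arith_mean_rpow s (fun _ => (#s : ℝ)⁻¹) x
    (fun _ _ => by positivity) (by simp [hm.ne']) hx hp
  rw [← Finset.mul_sum, hsum, mul_one, ← Finset.mul_sum] at hjensen
  calc (#s : ℝ) ^ (1 - p) = #s * (#s : ℝ)⁻¹ ^ p := by
        rw [Real.rpow_sub hm, Real.rpow_one, Real.inv_rpow hm.le, div_eq_mul_inv]
    _ ≤ #s * ((#s : ℝ)⁻¹ * ∑ i ∈ s, x i ^ p) := by gcongr
    _ = ∑ i ∈ s, x i ^ p := by rw [mul_inv_cancel_left₀ hm.ne']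

lemma Fintype.card_sub_one_rpow_one_sub_le_sum_rpow_of_eq_zero {ι : Type*} [Fintype ι]
    [DecidableEq ι] {x : ι → ℝ} (hx : ∀ i, 0 ≤ x i) (hsum : ∑ i, x i = 1) {j : ι}
    (hj : x j = 0) {p : ℝ} (hp : 1 ≤ p) :
    ((Fintype.card ι : ℝ) - 1) ^ (1 - p) ≤ ∑ i, x i ^ p := by
  have hcard : ((#(univ.erase j) : ℕ) : ℝ) = Fintype.card ι - 1 := by
    rw [card_erase_of_mem (mem_univ j), card_univ, Nat.cast_pred (Fintype.card_pos_iff.mpr ⟨j⟩)]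
  have hsum' : ∑ i ∈ univ.erase j, x i = 1 := by
    rw [← hsum, ← sum_erase_add _ _ (mem_univ j), hj, add_zero]
  calc ((Fintype.card ι : ℝ) - 1) ^ (1 - p) ≤ ∑ i ∈ univ.erase j, x i ^ p := by
        rw [← hcard]; exact card_rpow_one_sub_le_sum_rpow _ (fun i _ => hx i) hsum' hp
    _ ≤ ∑ i, x i ^ p :=
        sum_le_sum_of_subset_of_nonneg (subset_univ _) fun i _ _ => Real.rpow_nonneg (hx i) p

namespace Matrix.IsHermitian

variable {n : Type*} [Fintype n] [DecidableEq n]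

lemma eigenvalues_eq_zero_or_eq_of_mul_self {A : Matrix n n ℝ} (hA : A.IsHermitian) {c : ℝ}
    (hsq : A * A = c • A) (i : n) : hA.eigenvalues i = 0 ∨ hA.eigenvalues i = c := by
  set v := ⇑(hA.eigenvectorBasis i)
  set μ := hA.eigenvalues i
  have hv : A *ᵥ v = μ • v := hA.mulVec_eigenvectorBasis i
  have hv0 : v ≠ 0 := (WithLp.ofLp_eq_zero 2).ne.2 (hA.eigenvectorBasis.orthonormal.ne_zero i)
  have hμ : (μ * (μ - c)) • v = 0 := by
    have h := congrArg (· *ᵥ v) hsq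
    simp only [← mulVec_mulVec, smul_mulVec, hv, mulVec_smul, smul_smul] at h
    rw [mul_sub, sub_smul, h, mul_comm, sub_self]
  rcases mul_eq_zero.mp ((smul_eq_zero.mp hμ).resolve_right hv0) with h | h
  · exact Or.inl h
  · exact Or.inr (sub_eq_zero.mp h)

lemma exists_eigenvalues_eq_zero {𝕜 : Type*} [RCLike 𝕜] {A : Matrix n n 𝕜}
    (hA : A.IsHermitian) (hdet : A.det = 0) : ∃ i, hA.eigenvalues i = 0 := by
  obtain ⟨i, -, hi⟩ := prod_eq_zero_iff.mp (hA.det_eq_prod_eigenvalues ▸ hdet)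
  exact ⟨i, RCLike.ofReal_eq_zero.mp hi⟩

end Matrix.IsHermitian

section NormalizedLaplacian

variable {V : Type*} [Fintype V] [DecidableEq V]

lemma one_div_sqrt_mul_mul_one_div_sqrt {a : ℝ} (ha : 0 ≤ a) (x : ℝ) :
    1 / √a * x * (1 / √a) = x / a := by
  rw [div_mul_eq_mul_div, one_mul, mul_one_div, div_div, Real.mul_self_sqrt ha]

lemma nLap_apply (G : SimpleGraph V) [DecidableRel G.Adj] (i j : V) :
    nLap G i j = 1 / √(G.degree i) *
      ((if i = j then (G.degree i : ℝ) else 0) - if G.Adj i j then 1 else 0) *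
      (1 / √(G.degree j)) := by
  simp [nLap, mul_diagonal, diagonal_mul, Matrix.sub_apply, diagonal_apply]

lemma nLap_apply_self (G : SimpleGraph V) [DecidableRel G.Adj] (v : V) :
    nLap G v v = (G.degree v : ℝ) / G.degree v := by
  rw [nLap_apply, if_pos rfl, if_neg (G.irrefl), sub_zero,
    one_div_sqrt_mul_mul_one_div_sqrt (Nat.cast_nonneg _)]

lemma trace_nLap (G : SimpleGraph V) [DecidableRel G.Adj] (hG : ∀ v, 0 < G.degree v) :
    (nLap G).trace = Fintype.card V := by
  simp [trace, nLap_apply_self, fun v => (hG v).ne']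

lemma nLap_top :
    nLap (⊤ : SimpleGraph V) =
      ((Fintype.card V : ℝ) - 1)⁻¹ • ((Fintype.card V : ℝ) • 1 - of fun _ _ => 1) := by
  ext i j
  have hdeg : ∀ v : V, ((⊤ : SimpleGraph V).degree v : ℝ) = Fintype.card V - 1 := fun v => by
    rw [complete_graph_degree, Nat.cast_pred (Fintype.card_pos_iff.mpr ⟨v⟩)]
  have hcard : (0 : ℝ) ≤ Fintype.card V - 1 := by
    rw [sub_nonneg, Nat.one_le_cast]; exact Fintype.card_pos_iff.mpr ⟨i⟩
  rw [nLap_apply, hdeg, hdeg, one_div_sqrt_mul_mul_one_div_sqrt hcard]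
  by_cases h : i = j
  · subst h; simp [div_eq_inv_mul]
  · simp [h, div_eq_inv_mul]

lemma nLap_top_mul_self :
    nLap (⊤ : SimpleGraph V) * nLap ⊤ =
      ((Fintype.card V : ℝ) / (Fintype.card V - 1)) • nLap (⊤ : SimpleGraph V) := by
  rw [nLap_top]
  set N : ℝ := (Fintype.card V : ℝ)
  set J : Matrix V V ℝ := of fun _ _ => 1
  have hJ : J * J = N • J := by
    ext i j; simp [J, N, mul_apply]
  have hM : (N • 1 - J) * (N • 1 - J) = N • (N • 1 - J) := by
    simp only [sub_mul, mul_sub, hJ, Matrix.smul_mul, Matrix.mul_smul, Matrix.one_mul,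
      Matrix.mul_one, smul_sub]
    abel
  rw [smul_mul_smul_comm, hM, smul_smul, smul_smul]
  ring_nf

lemma nLap_eq_diagonal_mul_lapMatrix_mul_diagonal (G : SimpleGraph V) [DecidableRel G.Adj] :
    nLap G = diagonal (fun v => 1 / √(G.degree v : ℝ)) * G.lapMatrix ℝ *
      diagonal (fun v => 1 / √(G.degree v : ℝ)) :=
  rfl

lemma posSemidef_nLap (G : SimpleGraph V) [DecidableRel G.Adj] : (nLap G).PosSemidef := by
  rw [nLap_eq_diagonal_mul_lapMatrix_mul_diagonal]
  have h := (posSemidef_lapMatrix ℝ G).mul_mul_conjTranspose_same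
    (diagonal fun v => 1 / √(G.degree v : ℝ))
  rwa [diagonal_conjTranspose, star_trivial] at h

lemma nLap_mulVec_sqrt_degree (G : SimpleGraph V) [DecidableRel G.Adj]
    (hG : ∀ v, 0 < G.degree v) : nLap G *ᵥ (fun v => √(G.degree v : ℝ)) = 0 := by
  have hD : diagonal (fun v => 1 / √(G.degree v : ℝ)) *ᵥ (fun v => √(G.degree v : ℝ)) =
      fun _ => 1 := by
    ext v
    have : √(G.degree v : ℝ) ≠ 0 := Real.sqrt_ne_zero'.mpr (Nat.cast_pos.mpr (hG v))
    simp [mulVec_diagonal, this]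
  rw [nLap_eq_diagonal_mul_lapMatrix_mul_diagonal, ← mulVec_mulVec, hD, ← mulVec_mulVec,
    lapMatrix_mulVec_const_eq_zero, mulVec_zero]

lemma det_nLap [Nonempty V] (G : SimpleGraph V) [DecidableRel G.Adj]
    (hG : ∀ v, 0 < G.degree v) : (nLap G).det = 0 := by
  refine exists_mulVec_eq_zero_iff.mp ⟨_, fun h => ?_, nLap_mulVec_sqrt_degree G hG⟩
  obtain ⟨v⟩ := ‹Nonempty V›
  exact Real.sqrt_ne_zero'.mpr (Nat.cast_pos.mpr (hG v)) (congrFun h v)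

lemma sum_eigenvalues_eq_one [Nonempty V] (G : SimpleGraph V) [DecidableRel G.Adj]
    (hG : ∀ v, 0 < G.degree v) {A : Matrix V V ℝ} (hA : A.IsHermitian)
    (hAG : A = (Fintype.card V : ℝ)⁻¹ • nLap G) : ∑ i, hA.eigenvalues i = 1 := by
  have htrace := hA.trace_eq_sum_eigenvalues
  simp only [RCLike.ofReal_real_eq_id, id] at htrace
  rw [← htrace, hAG, trace_smul, trace_nLap G hG, smul_eq_mul,
    inv_mul_cancel₀ (Nat.cast_ne_zero.mpr Fintype.card_ne_zero)]

lemma sum_eigenvalues_rpow_of_top [Nontrivial V] {A : Matrix V V ℝ} (hA : A.IsHermitian)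
    (hAK : A = (Fintype.card V : ℝ)⁻¹ • nLap (⊤ : SimpleGraph V)) {p : ℝ} (hp : 0 < p) :
    ∑ i, hA.eigenvalues i ^ p = ((Fintype.card V : ℝ) - 1) ^ (1 - p) := by
  have hN : (1 : ℝ) < Fintype.card V := Nat.one_lt_cast.mpr Fintype.one_lt_card
  have hdeg : ∀ v : V, 0 < (⊤ : SimpleGraph V).degree v := fun v => by
    rw [complete_graph_degree]; have := Fintype.one_lt_card (α := V); omega
  have hsq : A * A = ((Fintype.card V : ℝ) - 1)⁻¹ • A := by
    rw [hAK, smul_mul_smul_comm, nLap_top_mul_self, smul_smul, smul_smul]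
    congr 1
    field_simp
  rw [sum_rpow_of_eq_zero_or_eq _ hp (by simpa using hN)
      (fun i _ => hA.eigenvalues_eq_zero_or_eq_of_mul_self hsq i)
      (sum_eigenvalues_eq_one _ hdeg hA hAK),
    Real.inv_rpow (by linarith), ← Real.rpow_neg (by linarith), neg_sub]

lemma rpow_le_sum_eigenvalues_rpow [Nontrivial V] (G : SimpleGraph V) [DecidableRel G.Adj]
    (hconn : G.Connected) {A : Matrix V V ℝ} (hA : A.IsHermitian)
    (hAG : A = (Fintype.card V : ℝ)⁻¹ • nLap G) {p : ℝ} (hp : 1 ≤ p) :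
    ((Fintype.card V : ℝ) - 1) ^ (1 - p) ≤ ∑ i, hA.eigenvalues i ^ p := by
  have hdeg : ∀ v, 0 < G.degree v := fun v => hconn.preconnected.degree_pos_of_nontrivial v
  have hpsd : A.PosSemidef := hAG ▸ (posSemidef_nLap G).smul (by positivity)
  obtain ⟨j, hj⟩ := hA.exists_eigenvalues_eq_zero
    (by rw [hAG, det_smul, det_nLap G hdeg, mul_zero])
  exact Fintype.card_sub_one_rpow_one_sub_le_sum_rpow_of_eq_zero hpsd.eigenvalues_nonneg
    (sum_eigenvalues_eq_one G hdeg hA hAG) hj hp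

end NormalizedLaplacian

/-- The complete graph maximizes the Rényi-p entropy (p > 1) of the normalized
symmetric Laplacian among connected graphs: H_p(G) ≤ H_p(K_n) = log(n-1). -/
theorem stmt_12 (n : ℕ) (hn : 2 ≤ n) (p : ℝ) (hp : 1 < p)
    (G : SimpleGraph (Fin n)) [DecidableRel G.Adj] (hconn : G.Connected)
    (hG : (((n : ℝ)⁻¹) • nLap G).IsHermitian)
    (hK : (((n : ℝ)⁻¹) • nLap (⊤ : SimpleGraph (Fin n))).IsHermitian) :
    (1 / (1 - p)) * Real.log (∑ i, hG.eigenvalues i ^ p) ≤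
      (1 / (1 - p)) * Real.log (∑ i, hK.eigenvalues i ^ p) ∧
    (1 / (1 - p)) * Real.log (∑ i, hK.eigenvalues i ^ p) = Real.log ((n : ℝ) - 1) := by
  have : Nontrivial (Fin n) := Fin.nontrivial_iff_two_le.mpr hn
  have hn1 : (0 : ℝ) < n - 1 := by
    rw [sub_pos, Nat.one_lt_cast]; omega
  have hp1 : 1 - p < 0 := by linarith
  have hK_sum : ∑ i, hK.eigenvalues i ^ p = ((n : ℝ) - 1) ^ (1 - p) := by
    simpa using sum_eigenvalues_rpow_of_top hK (by simp) (by linarith)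
  have hG_sum : ((n : ℝ) - 1) ^ (1 - p) ≤ ∑ i, hG.eigenvalues i ^ p := by
    simpa using rpow_le_sum_eigenvalues_rpow G hconn hG (by simp) hp.le
  rw [hK_sum]
  refine ⟨?_, ?_⟩
  · exact mul_le_mul_of_nonpos_left (Real.log_le_log (by positivity) hG_sum)
      (one_div_neg.mpr hp1).le
  · rw [Real.log_rpow hn1, one_div, inv_mul_cancel_left₀ hp1.ne]
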